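/- arXiv:1405.6502 — 2 statements merged into one kernel-verified Lean document; each statement's English description precedes it below -/
import Mathlib

section
/- (Cauchy criterion for the order-Henstock integral.) A function f: T → X is order-Henstock integrable if and only if there exist an (o)-sequence (b_n) and a corresponding sequence of gages (γ_n) such that for every n and all γ_n-fine Henstock partitions Π, Π′ of T, one has |σ(f,Π) − σ(f,Π′)| ≤ b_n. -/
open MeasureTheory Set Filter

/-- A tagged partition of the set `A`: finitely many pairwise disjoint measurable
sets covering `A`, each with a tag point. -/
structure TaggedPart (T : Type*) [MeasurableSpace T] (A : Set T) where
  k : ℕ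
  E : Fin k → Set T
  tag : Fin k → T
  meas : ∀ i, MeasurableSet (E i)
  disj : ∀ i j, i ≠ j → Disjoint (E i) (E j)
  cover : (⋃ i, E i) = A

namespace TaggedPart

variable {T : Type*} [MeasurableSpace T] {A : Set T}

/-- A Henstock partition: each tag belongs to its set. -/
def IsHenstock (P : TaggedPart T A) : Prop := ∀ i, P.tag i ∈ P.E i

/-- `γ`-fineness: each set is within distance `γ (tag)` of its tag. -/
def IsFine [PseudoMetricSpace T] (γ : T → ℝ) (P : TaggedPart T A) : Prop :=
  ∀ i, ∀ w ∈ P.E i, dist w (P.tag i) < γ (P.tag i)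

/-- The Riemann sum `σ(f, P) = ∑ μ(Eᵢ) • f(tᵢ)`. -/
noncomputable def sum {X : Type*} [AddCommMonoid X] [Module ℝ X]
    (P : TaggedPart T A) (f : T → X) (μ : Measure T) : X :=
  ∑ i, (μ (P.E i)).toReal • f (P.tag i)

end TaggedPart

/-- A gage is a strictly positive function. -/
def IsGage {T : Type*} (γ : T → ℝ) : Prop := ∀ t, 0 < γ t

/-- An (o)-sequence: decreasing with infimum `0`. -/
def IsOSeq {X : Type*} [Lattice X] [AddCommGroup X] (b : ℕ → X) : Prop :=
  Antitone b ∧ IsGLB (Set.range b) 0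

section Defs

variable {T : Type*} [MeasurableSpace T] [PseudoMetricSpace T]
  {X : Type*} [NormedAddCommGroup X] [Lattice X] [HasSolidNorm X] [IsOrderedAddMonoid X] [NormedSpace ℝ X]

/-- Order-Henstock integrability of `f` on `A` with integral `J`. -/
def HasOHIntegralOn (f : T → X) (μ : Measure T) (A : Set T) (J : X) : Prop :=
  ∃ b : ℕ → X, IsOSeq b ∧ ∃ γ : ℕ → T → ℝ, (∀ n, IsGage (γ n)) ∧
    ∀ n (P : TaggedPart T A), P.IsHenstock → P.IsFine (γ n) →
      |P.sum f μ - J| ≤ b n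

/-- Order-McShane (free partition) integrability of `f` on `A` with integral `J`. -/
def HasOMIntegralOn (f : T → X) (μ : Measure T) (A : Set T) (J : X) : Prop :=
  ∃ b : ℕ → X, IsOSeq b ∧ ∃ γ : ℕ → T → ℝ, (∀ n, IsGage (γ n)) ∧
    ∀ n (P : TaggedPart T A), P.IsFine (γ n) → |P.sum f μ - J| ≤ b n

/-- Order-McShane integrability with a prescribed regulating (o)-sequence `b`. -/
def HasOMIntegralOnWith (f : T → X) (μ : Measure T) (A : Set T) (J : X)
    (b : ℕ → X) : Prop :=
  ∃ γ : ℕ → T → ℝ, (∀ n, IsGage (γ n)) ∧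
    ∀ n (P : TaggedPart T A), P.IsFine (γ n) → |P.sum f μ - J| ≤ b n

/-- Norm-Henstock integrability of `f` on `A` with integral `J`. -/
def HasNormHIntegralOn (f : T → X) (μ : Measure T) (A : Set T) (J : X) : Prop :=
  ∀ ε : ℝ, 0 < ε → ∃ γ : T → ℝ, IsGage γ ∧
    ∀ P : TaggedPart T A, P.IsHenstock → P.IsFine γ → ‖P.sum f μ - J‖ ≤ ε

/-- Norm-McShane (free partition) integrability of `f` on `A` with integral `J`. -/
def HasNormMIntegralOn (f : T → X) (μ : Measure T) (A : Set T) (J : X) : Prop :=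
  ∀ ε : ℝ, 0 < ε → ∃ γ : T → ℝ, IsGage γ ∧
    ∀ P : TaggedPart T A, P.IsFine γ → ‖P.sum f μ - J‖ ≤ ε

end Defs

/-!
The forward direction is the triangle inequality through the integral, with the (o)-sequence
`b n + b n`. For the converse, first make the gages decreasing; then the sets `S n` of Riemann
sums of `γ n`-fine Henstock partitions decrease and each has order-diameter at most `b n`. By
Dedekind completeness, `J = inf_n sup S n` exists, and it lies within `b n` of every point of `S n`.
-/

section LatticeOrderedGroup

variable {X : Type*} [Lattice X] [AddCommGroup X] [IsOrderedAddMonoid X]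

theorem IsOSeq.add {b c : ℕ → X} (hb : IsOSeq b) (hc : IsOSeq c) : IsOSeq (b + c) := by
  refine ⟨hb.1.add hc.1, ?_, fun x hx => ?_⟩
  · rintro _ ⟨n, rfl⟩
    exact add_nonneg (hb.2.1 ⟨n, rfl⟩) (hc.2.1 ⟨n, rfl⟩)
  have hx_le : ∀ m n, x ≤ b m + c n := fun m n =>
    (hx ⟨max m n, rfl⟩).trans (add_le_add (hb.1 (le_max_left m n)) (hc.1 (le_max_right m n)))
  have hx_sub : ∀ n, x - c n ≤ 0 := fun n =>
    hb.2.2 (by rintro _ ⟨m, rfl⟩; exact sub_le_iff_le_add.2 (hx_le m n))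
  exact hc.2.2 (by rintro _ ⟨n, rfl⟩; exact sub_nonpos.1 (hx_sub n))

theorem abs_sub_le_of_le_add_of_le_add {x y c : X} (hxy : x ≤ y + c) (hyx : y ≤ x + c) :
    |x - y| ≤ c :=
  abs_le'.2 ⟨sub_le_iff_le_add.2 (add_comm y c ▸ hxy),
    (neg_sub x y).symm ▸ sub_le_iff_le_add.2 (add_comm x c ▸ hyx)⟩

theorem le_add_of_abs_sub_le {x y c : X} (h : |x - y| ≤ c) : x ≤ y + c :=
  add_comm c y ▸ sub_le_iff_le_add.1 ((le_abs_self _).trans h)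

variable (hDC : ∀ s : Set X, s.Nonempty → BddAbove s → ∃ x, IsLUB s x)
include hDC

theorem exists_isGLB_of_forall_exists_isLUB {s : Set X} (hne : s.Nonempty) (hbdd : BddBelow s) :
    ∃ x, IsGLB s x := by
  obtain ⟨x, hx⟩ := hDC (-s) hne.neg hbdd.neg
  exact ⟨-x, by simpa using hx.neg⟩

theorem exists_forall_abs_sub_le_of_antitone {S : ℕ → Set X} {b : ℕ → X} (hS : Antitone S)
    (hne : ∀ n, (S n).Nonempty) (hdiam : ∀ n, ∀ x ∈ S n, ∀ y ∈ S n, |x - y| ≤ b n) :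
    ∃ J, ∀ n, ∀ x ∈ S n, |x - J| ≤ b n := by
  have hle : ∀ n, ∀ x ∈ S n, ∀ y ∈ S n, x ≤ y + b n := fun n x hx y hy =>
    le_add_of_abs_sub_le (hdiam n x hx y hy)
  choose u hu using fun n =>
    hDC (S n) (hne n) ⟨(hne n).some + b n, fun x hx => hle n x hx _ (hne n).some_mem⟩
  have hu_anti : Antitone u := fun m n hmn => (hu n).2 fun y hy => (hu m).1 (hS hmn hy)
  obtain ⟨x₀, hx₀⟩ := hne 0
  have hu_bdd : BddBelow (range u) := by
    refine ⟨x₀ - b 0, ?_⟩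
    rintro _ ⟨n, rfl⟩
    obtain ⟨y, hy⟩ := hne n
    exact (sub_le_iff_le_add.2 (hle 0 x₀ hx₀ y (hS (Nat.zero_le n) hy))).trans ((hu n).1 hy)
  obtain ⟨J, hJ⟩ := exists_isGLB_of_forall_exists_isLUB hDC (range_nonempty u) hu_bdd
  refine ⟨J, fun n x hx => abs_sub_le_of_le_add_of_le_add ?_ ?_⟩
  · suffices x - b n ≤ J from sub_le_iff_le_add.1 this
    refine hJ.2 ?_
    rintro _ ⟨m, rfl⟩
    obtain ⟨y, hy⟩ := hne (max m n)
    calc x - b n ≤ y := sub_le_iff_le_add.2 (hle n x hx y (hS (le_max_right m n) hy))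
      _ ≤ u (max m n) := (hu _).1 hy
      _ ≤ u m := hu_anti (le_max_left m n)
  · exact (hJ.1 ⟨n, rfl⟩).trans ((hu n).2 fun y hy => hle n y hy x hx)

end LatticeOrderedGroup

theorem TaggedPart.IsFine.mono {T : Type*} [MeasurableSpace T] [PseudoMetricSpace T] {A : Set T}
    {P : TaggedPart T A} {γ γ' : T → ℝ} (hP : P.IsFine γ) (hγ : γ ≤ γ') : P.IsFine γ' :=
  fun i w hw => (hP i w hw).trans_le (hγ _)

theorem exists_antitone_gage_le {T : Type*} {γ : ℕ → T → ℝ} (hγ : ∀ n, IsGage (γ n)) :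
    ∃ γ' : ℕ → T → ℝ, (∀ n, IsGage (γ' n)) ∧ Antitone γ' ∧ γ' ≤ γ := by
  refine ⟨fun n => (Finset.range (n + 1)).inf' Finset.nonempty_range_add_one γ, ?_, ?_, ?_⟩
  · intro n t
    simp only [Finset.inf'_apply, Finset.lt_inf'_iff]
    exact fun i _ => hγ i t
  · intro m n hmn
    exact Finset.inf'_mono γ (Finset.range_subset_range.2 (by omega)) _
  · intro n
    exact Finset.inf'_le γ (Finset.self_mem_range_succ n)

theorem oH_cauchy_criterion_general {T : Type*} [MetricSpace T] [MeasurableSpace T]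
    (μ : Measure T)
    {X : Type*} [NormedAddCommGroup X] [Lattice X] [HasSolidNorm X] [IsOrderedAddMonoid X] [NormedSpace ℝ X]
    (hDC : ∀ s : Set X, s.Nonempty → BddAbove s → ∃ x, IsLUB s x) (f : T → X) :
    (∃ J : X, HasOHIntegralOn f μ Set.univ J) ↔
      ∃ b : ℕ → X, IsOSeq b ∧ ∃ γ : ℕ → T → ℝ, (∀ n, IsGage (γ n)) ∧
        ∀ n (P P' : TaggedPart T (Set.univ : Set T)),
          P.IsHenstock → P.IsFine (γ n) → P'.IsHenstock → P'.IsFine (γ n) →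
            |P.sum f μ - P'.sum f μ| ≤ b n := by
  constructor
  · rintro ⟨J, b, hb, γ, hγ, hJ⟩
    refine ⟨b + b, hb.add hb, γ, hγ, fun n P P' hP hPf hP' hP'f => ?_⟩
    calc |P.sum f μ - P'.sum f μ| = |(P.sum f μ - J) + (J - P'.sum f μ)| := by
          rw [sub_add_sub_cancel]
      _ ≤ |P.sum f μ - J| + |P'.sum f μ - J| := abs_sub_comm J (P'.sum f μ) ▸ abs_add_le _ _
      _ ≤ b n + b n := add_le_add (hJ n P hP hPf) (hJ n P' hP' hP'f)
  · rintro ⟨b, hb, γ₀, hγ₀, hcauchy⟩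
    obtain ⟨γ, hγ, hγ_anti, hγ_le⟩ := exists_antitone_gage_le hγ₀
    set S : ℕ → Set X := fun n =>
      (fun P : TaggedPart T univ => P.sum f μ) '' {P | P.IsHenstock ∧ P.IsFine (γ n)}
    by_cases hne : ∀ n, (S n).Nonempty
    · have hS : Antitone S := fun m n hmn =>
        image_mono fun P hP => ⟨hP.1, hP.2.mono (hγ_anti hmn)⟩
      obtain ⟨J, hJ⟩ := exists_forall_abs_sub_le_of_antitone hDC hS hne <| by
        rintro n _ ⟨P, ⟨hP, hPf⟩, rfl⟩ _ ⟨P', ⟨hP', hP'f⟩, rfl⟩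
        exact hcauchy n P P' hP (hPf.mono (hγ_le n)) hP' (hP'f.mono (hγ_le n))
      exact ⟨J, b, hb, γ, hγ, fun n P hP hPf => hJ n _ ⟨P, ⟨hP, hPf⟩, rfl⟩⟩
    · obtain ⟨N, hN⟩ := not_forall.1 hne
      exact ⟨0, b, hb, fun _ => γ N, fun _ => hγ N, fun _ P hP hPf =>
        (hN ⟨_, P, ⟨hP, hPf⟩, rfl⟩).elim⟩

theorem oH_cauchy_criterion {T : Type*} [MetricSpace T] [CompactSpace T] [MeasurableSpace T] [BorelSpace T]
    (μ : Measure T) [IsFiniteMeasure μ] [μ.Regular]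
    {X : Type*} [NormedAddCommGroup X] [Lattice X] [HasSolidNorm X] [IsOrderedAddMonoid X] [NormedSpace ℝ X] [CompleteSpace X]
    (hDC : ∀ s : Set X, s.Nonempty → BddAbove s → ∃ x, IsLUB s x) (f : T → X) :
    (∃ J : X, HasOHIntegralOn f μ Set.univ J) ↔
      ∃ b : ℕ → X, IsOSeq b ∧ ∃ γ : ℕ → T → ℝ, (∀ n, IsGage (γ n)) ∧
        ∀ n (P P' : TaggedPart T (Set.univ : Set T)),
          P.IsHenstock → P.IsFine (γ n) → P'.IsHenstock → P'.IsFine (γ n) →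
            |P.sum f μ - P'.sum f μ| ≤ b n :=
  oH_cauchy_criterion_general μ hDC f
end

section
/- Let X be an L-space (a Banach lattice whose norm satisfies ‖x+y‖ = ‖x‖+‖y‖ for all x, y ≥ 0) and f: T → X order-Henstock integrable. Then the scalar function t ↦ ‖f(t)‖ is Henstock integrable. -/
open MeasureTheory Set Filter

/-! The order form of the Henstock lemma is obtained by a sign trick: mixing two tag assignments
on a set `S` of cells and on its complement bounds `|∑_S y - ∑_{Sᶜ} y|` by `2 b_n` for every `S`,
and `|a| + |c| = |a + c| ⊔ |a - c|` turns this into `∑ |y| ≤ 2 b_n`. In an L-space the norm is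
additive on the positive cone, so this becomes `∑ μ(E) |‖f(τ_E)‖ - ‖f(τ'_E)‖| ≤ 2 ‖b_n‖`. Thus
the Riemann sums of `‖f‖` over `γ_n`-fine Henstock partitions form a Cauchy net, because the norm
of an (o)-sequence in a complete L-space tends to `0`. -/

open Topology Function

section LatticeOrderedGroup

variable {X : Type*} [Lattice X] [AddCommGroup X] [AddLeftMono X]

theorem abs_add_abs_le_abs_add_sup_abs_sub (a b : X) : |a| + |b| ≤ |a + b| ⊔ |a - b| := by
  rw [abs, sup_add, abs, add_sup, add_sup]
  refine sup_le (sup_le (le_sup_of_le_left (le_abs_self _)) (le_sup_of_le_right ?_))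
    (sup_le (le_sup_of_le_right ?_) (le_sup_of_le_left ?_))
  · rw [← sub_eq_add_neg]; exact le_abs_self _
  · rw [neg_add_eq_sub, ← neg_sub]; exact neg_le_abs _
  · rw [← neg_add]; exact neg_le_abs _

theorem abs_add_sum_abs_le_of_forall_subset {ι : Type*} [DecidableEq ι] (u : Finset ι)
    (x : ι → X) (c t : X)
    (h : ∀ S ⊆ u, |t + ((∑ i ∈ S, x i) - ∑ i ∈ u \ S, x i)| ≤ c) :
    |t| + ∑ i ∈ u, |x i| ≤ c := by
  induction u using Finset.induction_on generalizing t with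
  | empty => simpa using h ∅ le_rfl
  | @insert a u ha ih =>
    have h_add : |t + x a| + ∑ i ∈ u, |x i| ≤ c := ih (t + x a) fun S hS => by
      have hS' := h (insert a S) (Finset.insert_subset_insert a hS)
      rwa [Finset.insert_sdiff_insert, Finset.sdiff_insert_of_notMem ha,
        Finset.sum_insert fun haS => ha (hS haS),
        show ∀ s r : X, t + (x a + s - r) = t + x a + (s - r) from fun s r => by abel] at hS'
    have h_sub : |t - x a| + ∑ i ∈ u, |x i| ≤ c := ih (t - x a) fun S hS => by
      have hS' := h S (hS.trans (Finset.subset_insert a u))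
      rwa [Finset.insert_sdiff_of_notMem _ fun haS => ha (hS haS),
        Finset.sum_insert fun hau => ha (Finset.mem_sdiff.1 hau).1,
        show ∀ s r : X, t + (s - (x a + r)) = t - x a + (s - r) from fun s r => by abel] at hS'
    calc |t| + ∑ i ∈ insert a u, |x i| = (|t| + |x a|) + ∑ i ∈ u, |x i| := by
          rw [Finset.sum_insert ha, add_assoc]
      _ ≤ (|t + x a| ⊔ |t - x a|) + ∑ i ∈ u, |x i| :=
          add_le_add_left (abs_add_abs_le_abs_add_sup_abs_sub t (x a)) _
      _ ≤ c := by rw [sup_add]; exact sup_le h_add h_sub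

theorem sum_abs_le_of_forall_subset {ι : Type*} [DecidableEq ι] (u : Finset ι) (x : ι → X)
    (c : X) (h : ∀ S ⊆ u, |(∑ i ∈ S, x i) - ∑ i ∈ u \ S, x i| ≤ c) :
    ∑ i ∈ u, |x i| ≤ c := by
  simpa using abs_add_sum_abs_le_of_forall_subset u x c 0 (by simpa using h)

end LatticeOrderedGroup

section LSpace

variable {X : Type*} [NormedAddCommGroup X] [Lattice X] [IsOrderedAddMonoid X]

theorem norm_sum_of_nonneg (hL : ∀ x y : X, 0 ≤ x → 0 ≤ y → ‖x + y‖ = ‖x‖ + ‖y‖)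
    {ι : Type*} (u : Finset ι) {y : ι → X} (hy : ∀ i ∈ u, 0 ≤ y i) :
    ‖∑ i ∈ u, y i‖ = ∑ i ∈ u, ‖y i‖ := by
  classical
  induction u using Finset.induction_on with
  | empty => simp
  | @insert a u ha ih =>
    have hy' : ∀ i ∈ u, 0 ≤ y i := fun i hi => hy i (Finset.mem_insert_of_mem hi)
    rw [Finset.sum_insert ha, Finset.sum_insert ha,
      hL _ _ (hy a (Finset.mem_insert_self a u)) (Finset.sum_nonneg hy'), ih hy']

theorem norm_sub_of_le (hL : ∀ x y : X, 0 ≤ x → 0 ≤ y → ‖x + y‖ = ‖x‖ + ‖y‖)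
    {x y : X} (hy : 0 ≤ y) (hyx : y ≤ x) : ‖x - y‖ = ‖x‖ - ‖y‖ := by
  have := hL (x - y) y (sub_nonneg.2 hyx) hy
  rw [sub_add_cancel] at this
  linarith

theorem tendsto_norm_of_isOSeq [HasSolidNorm X] [CompleteSpace X]
    (hL : ∀ x y : X, 0 ≤ x → 0 ≤ y → ‖x + y‖ = ‖x‖ + ‖y‖) {b : ℕ → X} (hb : IsOSeq b) :
    Tendsto (fun n => ‖b n‖) atTop (𝓝 0) := by
  have hpos : ∀ n, 0 ≤ b n := fun n => hb.2.1 ⟨n, rfl⟩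
  have hanti : Antitone fun n => ‖b n‖ := fun m n hmn =>
    norm_le_norm_of_abs_le_abs <| by
      rw [abs_of_nonneg (hpos n), abs_of_nonneg (hpos m)]; exact hb.1 hmn
  have hdist : ∀ m n, dist (b m) (b n) = dist ‖b m‖ ‖b n‖ := by
    suffices ∀ m n, m ≤ n → dist (b m) (b n) = dist ‖b m‖ ‖b n‖ from fun m n =>
      (le_total m n).elim (this m n) fun h => by rw [dist_comm, this n m h, dist_comm]
    intro m n hmn
    rw [dist_eq_norm, norm_sub_of_le hL (hpos n) (hb.1 hmn), Real.dist_eq,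
      abs_of_nonneg (sub_nonneg.2 (hanti hmn))]
  have hnorm_cauchy : CauchySeq fun n => ‖b n‖ :=
    (tendsto_atTop_ciInf hanti ⟨0, by rintro _ ⟨n, rfl⟩; exact norm_nonneg _⟩).cauchySeq
  obtain ⟨L, hbL⟩ := cauchySeq_tendsto_of_complete <| Metric.cauchySeq_iff.2 fun ε hε =>
    (Metric.cauchySeq_iff.1 hnorm_cauchy ε hε).imp fun N hN m hm n hn =>
      (hdist m n).symm ▸ hN m hm n hn
  have hL_lower : L ∈ lowerBounds (range b) := by
    rintro _ ⟨n, rfl⟩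
    exact le_of_tendsto hbL (eventually_atTop.2 ⟨n, fun m hm => hb.1 hm⟩)
  have hL0 : L = 0 := le_antisymm (hb.2.2 hL_lower) (ge_of_tendsto' hbL hpos)
  simpa [hL0] using hbL.norm

end LSpace

structure IsMeasurablePartition {T ι : Type*} [MeasurableSpace T] (C : ι → Set T) (A : Set T) :
    Prop where
  measurableSet : ∀ i, MeasurableSet (C i)
  pairwise_disjoint : Pairwise (Disjoint on C)
  iUnion_eq : ⋃ i, C i = A

def withPoints {T κ : Type*} (Z : Finset T) (D : κ → Set T) : Z ⊕ κ → Set T :=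
  Sum.elim (fun z => {(z : T)}) D

namespace IsMeasurablePartition

variable {T ι ι' : Type*} [MeasurableSpace T] {A : Set T} {C : ι → Set T} {C' : ι' → Set T}

theorem inter (hC : IsMeasurablePartition C A) (hC' : IsMeasurablePartition C' A) :
    IsMeasurablePartition (fun p : ι × ι' => C p.1 ∩ C' p.2) A where
  measurableSet p := (hC.measurableSet p.1).inter (hC'.measurableSet p.2)
  pairwise_disjoint p q hpq := by
    obtain h | h : p.1 ≠ q.1 ∨ p.2 ≠ q.2 := by
      by_contra! h
      exact hpq (Prod.ext h.1 h.2)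
    · exact (hC.pairwise_disjoint h).mono inter_subset_left inter_subset_left
    · exact (hC'.pairwise_disjoint h).mono inter_subset_right inter_subset_right
  iUnion_eq := by
    rw [iUnion_prod', ← iUnion_inter_iUnion, hC.iUnion_eq, hC'.iUnion_eq, inter_self]

theorem withPoints [MeasurableSingletonClass T] (hC : IsMeasurablePartition C A)
    (Z : Finset T) (hZ : ↑Z ⊆ A) : IsMeasurablePartition (withPoints Z fun i => C i \ Z) A where
  measurableSet
    | .inl _ => measurableSet_singleton _
    | .inr i => (hC.measurableSet i).diff Z.measurableSet
  pairwise_disjoint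
    | .inl z, .inl z', h => disjoint_singleton.2 fun e => h (congrArg _ (Subtype.ext e))
    | .inl z, .inr _, _ => disjoint_singleton_left.2 fun hz => hz.2 z.2
    | .inr _, .inl z, _ => disjoint_singleton_right.2 fun hz => hz.2 z.2
    | .inr i, .inr j, h =>
      (hC.pairwise_disjoint fun e => h (congrArg _ e)).mono sdiff_subset sdiff_subset
  iUnion_eq := by
    refine Subset.antisymm (iUnion_subset ?_) fun w hw => ?_
    · rintro (z | i)
      · exact singleton_subset_iff.2 (hZ z.2)
      · exact sdiff_subset.trans (hC.iUnion_eq ▸ subset_iUnion C i)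
    by_cases hwZ : w ∈ Z
    · exact mem_iUnion.2 ⟨.inl ⟨w, hwZ⟩, rfl⟩
    · obtain ⟨i, hi⟩ := mem_iUnion.1 (hC.iUnion_eq ▸ hw)
      exact mem_iUnion.2 ⟨.inr i, hi, hwZ⟩

end IsMeasurablePartition

namespace TaggedPart

section CellIndex

variable {T ι : Type*} [Fintype ι] (g : ι → T)

open Classical in
noncomputable def cellIndex (i : ι) : Fin (Finset.univ.image g).card :=
  (Finset.univ.image g).equivFin ⟨g i, Finset.mem_image_of_mem g (Finset.mem_univ i)⟩

open Classical in
theorem exists_cellIndex_eq (a : Fin (Finset.univ.image g).card) : ∃ i, cellIndex g i = a := by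
  obtain ⟨i, -, hi⟩ := Finset.mem_image.1 ((Finset.univ.image g).equivFin.symm a).2
  exact ⟨i, by simp [cellIndex, hi]⟩

variable {g} in
theorem cellIndex_congr {i j : ι} (h : g j = g i) : cellIndex g j = cellIndex g i := by
  simp [cellIndex, h]

end CellIndex

variable {T ι : Type*} [MeasurableSpace T] {A : Set T} {C : ι → Set T}

theorem isMeasurablePartition (P : TaggedPart T A) : IsMeasurablePartition P.E A :=
  ⟨P.meas, P.disj, P.cover⟩

theorem eq_of_mem_E (P : TaggedPart T A) {x : T} {a b : Fin P.k} (ha : x ∈ P.E a)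
    (hb : x ∈ P.E b) : a = b := by
  by_contra hab
  exact disjoint_left.1 (P.disj a b hab) ha hb

theorem tag_mem (P : TaggedPart T A) (hP : P.IsHenstock) (a : Fin P.k) : P.tag a ∈ A :=
  P.cover.subset (mem_iUnion_of_mem a (hP a))

theorem IsFine.mono_s11 [PseudoMetricSpace T] {P : TaggedPart T A} {γ δ : T → ℝ} (hP : P.IsFine δ)
    (hδ : ∀ t, δ t ≤ γ t) : P.IsFine γ :=
  fun a w hw => (hP a w hw).trans_le (hδ _)

theorem sum_eq_sum_cells [Fintype ι] {Y : Type*} [AddCommMonoid Y] [Module ℝ Y]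
    (P : TaggedPart T A) (hC : IsMeasurablePartition C A) (σ : ι → Fin P.k)
    (hσ : ∀ i, C i ⊆ P.E (σ i)) (μ : Measure T) [IsFiniteMeasure μ] (φ : T → Y) :
    P.sum φ μ = ∑ i, (μ (C i)).toReal • φ (P.tag (σ i)) := by
  classical
  have hE : ∀ a, P.E a = ⋃ i ∈ Finset.univ.filter (σ · = a), C i := fun a => by
    refine Subset.antisymm (fun w hw => ?_) (iUnion₂_subset fun i hi => ?_)
    · obtain ⟨i, hi⟩ := mem_iUnion.1 ((hC.iUnion_eq.trans P.cover.symm) ▸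
        mem_iUnion_of_mem a hw)
      exact mem_biUnion (Finset.mem_filter.2 ⟨Finset.mem_univ i,
        P.eq_of_mem_E (hσ i hi) hw⟩) hi
    · exact (Finset.mem_filter.1 hi).2 ▸ hσ i
  have hμ : ∀ a, (μ (P.E a)).toReal = ∑ i ∈ Finset.univ.filter (σ · = a), (μ (C i)).toReal :=
    fun a => by
      rw [hE, measure_biUnion_finset (hC.pairwise_disjoint.set_pairwise _)
        fun i _ => hC.measurableSet i, ENNReal.toReal_sum fun i _ => measure_ne_top μ _]
  calc P.sum φ μ
      = ∑ a, ∑ i ∈ Finset.univ.filter (σ · = a), (μ (C i)).toReal • φ (P.tag (σ i)) := by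
        refine Finset.sum_congr rfl fun a _ => ?_
        rw [hμ, Finset.sum_smul]
        exact Finset.sum_congr rfl fun i hi => by rw [(Finset.mem_filter.1 hi).2]
    _ = ∑ i, (μ (C i)).toReal • φ (P.tag (σ i)) := Finset.sum_fiberwise _ σ _

open Classical in
noncomputable def ofCells [Fintype ι] (hC : IsMeasurablePartition C A) (g : ι → T) :
    TaggedPart T A where
  k := (Finset.univ.image g).card
  E a := ⋃ (i) (_ : cellIndex g i = a), C i
  tag a := (Finset.univ.image g).equivFin.symm a
  meas _ := MeasurableSet.iUnion fun i => MeasurableSet.iUnion fun _ => hC.measurableSet i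
  disj a b hab := by
    simp only [disjoint_iUnion_left, disjoint_iUnion_right]
    rintro i rfl j rfl
    exact hC.pairwise_disjoint fun hij => hab (hij ▸ rfl)
  cover := by
    rw [← hC.iUnion_eq]
    exact Subset.antisymm (iUnion_subset fun _ => iUnion₂_subset fun i _ => subset_iUnion C i)
      fun w hw => mem_iUnion.2 ⟨_, mem_iUnion₂.2 ⟨_, rfl, (mem_iUnion.1 hw).choose_spec⟩⟩

variable [Fintype ι] (hC : IsMeasurablePartition C A) (g : ι → T)

theorem ofCells_tag_cellIndex (i : ι) : (ofCells hC g).tag (cellIndex g i) = g i := by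
  simp [ofCells, cellIndex]

theorem subset_ofCells_E (i : ι) : C i ⊆ (ofCells hC g).E (cellIndex g i) :=
  subset_iUnion₂_of_subset i rfl le_rfl

theorem ofCells_sum {Y : Type*} [AddCommMonoid Y] [Module ℝ Y] (μ : Measure T)
    [IsFiniteMeasure μ] (φ : T → Y) :
    (ofCells hC g).sum φ μ = ∑ i, (μ (C i)).toReal • φ (g i) := by
  simp only [sum_eq_sum_cells _ hC _ (subset_ofCells_E hC g), ofCells_tag_cellIndex]

theorem ofCells_isFine [PseudoMetricSpace T] {γ : T → ℝ}
    (hg : ∀ i, ∀ w ∈ C i, dist w (g i) < γ (g i)) : (ofCells hC g).IsFine γ := by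
  intro a w hw
  obtain ⟨i, rfl, hwi⟩ := mem_iUnion₂.1 hw
  rw [ofCells_tag_cellIndex]
  exact hg i w hwi

theorem ofCells_isHenstock (hg : ∀ i, ∃ j, g j = g i ∧ g i ∈ C j) :
    (ofCells hC g).IsHenstock := by
  intro a
  obtain ⟨i, rfl⟩ := exists_cellIndex_eq g a
  obtain ⟨j, hji, hj⟩ := hg i
  rw [ofCells_tag_cellIndex]
  exact cellIndex_congr hji ▸ subset_ofCells_E hC g j hj

end TaggedPart

section HenstockLemma

/-- This is what keeps every mixture of `g₁` and `g₂` a Henstock assignment. -/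
def TagsAnchored {T ι : Type*} (C : ι → Set T) (g₁ g₂ : ι → T) : Prop :=
  ∀ i, g₁ i ∈ C i ∨ ∃ j, g₁ j = g₁ i ∧ g₂ j = g₁ i ∧ g₁ i ∈ C j

theorem TagsAnchored.exists_piecewise {T ι : Type*} [DecidableEq ι] {C : ι → Set T}
    {g₁ g₂ : ι → T} (h₁₂ : TagsAnchored C g₁ g₂) (h₂₁ : TagsAnchored C g₂ g₁) (S : Finset ι)
    (i : ι) : ∃ j, S.piecewise g₁ g₂ j = S.piecewise g₁ g₂ i ∧ S.piecewise g₁ g₂ i ∈ C j := by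
  by_cases hi : i ∈ S
  · rw [S.piecewise_eq_of_mem _ _ hi]
    rcases h₁₂ i with hown | ⟨j, hj₁, hj₂, hjC⟩
    · exact ⟨i, S.piecewise_eq_of_mem _ _ hi, hown⟩
    · exact ⟨j, by by_cases hj : j ∈ S <;> simp [hj, hj₁, hj₂], hjC⟩
  · rw [S.piecewise_eq_of_notMem _ _ hi]
    rcases h₂₁ i with hown | ⟨j, hj₂, hj₁, hjC⟩
    · exact ⟨i, S.piecewise_eq_of_notMem _ _ hi, hown⟩
    · exact ⟨j, by by_cases hj : j ∈ S <;> simp [hj, hj₁, hj₂], hjC⟩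

variable {T ι : Type*} [MeasurableSpace T] [PseudoMetricSpace T] {A : Set T} [Fintype ι]
  {C : ι → Set T}

theorem sum_abs_smul_sub_le {X : Type*} [Lattice X] [AddCommGroup X] [AddLeftMono X]
    [Module ℝ X] (μ : Measure T) [IsFiniteMeasure μ] (f : T → X) {J b : X} {γ : T → ℝ}
    (hbd : ∀ Q : TaggedPart T A, Q.IsHenstock → Q.IsFine γ → |Q.sum f μ - J| ≤ b)
    (hC : IsMeasurablePartition C A) {g₁ g₂ : ι → T}
    (hg₁ : ∀ i, ∀ w ∈ C i, dist w (g₁ i) < γ (g₁ i))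
    (hg₂ : ∀ i, ∀ w ∈ C i, dist w (g₂ i) < γ (g₂ i))
    (h₁₂ : TagsAnchored C g₁ g₂) (h₂₁ : TagsAnchored C g₂ g₁) :
    ∑ i, |(μ (C i)).toReal • (f (g₁ i) - f (g₂ i))| ≤ b + b := by
  classical
  have hmix : ∀ {g g' : ι → T}, (∀ i, ∀ w ∈ C i, dist w (g i) < γ (g i)) →
      (∀ i, ∀ w ∈ C i, dist w (g' i) < γ (g' i)) → TagsAnchored C g g' →
      TagsAnchored C g' g → ∀ S : Finset ι,
      |(TaggedPart.ofCells hC (S.piecewise g g')).sum f μ - J| ≤ b :=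
    fun hg hg' h h' S => hbd _ (TaggedPart.ofCells_isHenstock hC _ (h.exists_piecewise h' S))
      (TaggedPart.ofCells_isFine hC _ fun i => by
        by_cases hi : i ∈ S
        · simpa [hi] using hg i
        · simpa [hi] using hg' i)
  refine sum_abs_le_of_forall_subset _ _ _ fun S _ => ?_
  have hdiff : (TaggedPart.ofCells hC (S.piecewise g₁ g₂)).sum f μ
      - (TaggedPart.ofCells hC (S.piecewise g₂ g₁)).sum f μ
      = (∑ i ∈ S, (μ (C i)).toReal • (f (g₁ i) - f (g₂ i)))
        - ∑ i ∈ Finset.univ \ S, (μ (C i)).toReal • (f (g₁ i) - f (g₂ i)) := by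
    rw [TaggedPart.ofCells_sum, TaggedPart.ofCells_sum, ← Finset.sum_sub_distrib,
      ← Finset.sum_sdiff (Finset.subset_univ S), add_comm, sub_eq_add_neg,
      ← Finset.sum_neg_distrib]
    congr 1
    · refine Finset.sum_congr rfl fun i hi => ?_
      simp [hi, smul_sub]
    · refine Finset.sum_congr rfl fun i hi => ?_
      simp [(Finset.mem_sdiff.1 hi).2, smul_sub]
  rw [← hdiff, ← sub_sub_sub_cancel_right _ _ J, sub_eq_add_neg]
  refine (abs_add_le _ _).trans ?_
  rw [abs_neg]
  exact add_le_add (hmix hg₁ hg₂ h₁₂ h₂₁ S) (hmix hg₂ hg₁ h₂₁ h₁₂ S)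

end HenstockLemma

section LSpaceEstimate

variable {X : Type*} [NormedAddCommGroup X] [Lattice X] [HasSolidNorm X] [IsOrderedAddMonoid X]
  [NormedSpace ℝ X]

theorem abs_sum_mul_norm_sub_norm_le (hL : ∀ x y : X, 0 ≤ x → 0 ≤ y → ‖x + y‖ = ‖x‖ + ‖y‖)
    {ι : Type*} (u : Finset ι) {m : ι → ℝ} (hm : ∀ i ∈ u, 0 ≤ m i) (a c : ι → X) :
    |∑ i ∈ u, m i * (‖a i‖ - ‖c i‖)| ≤ ‖∑ i ∈ u, |m i • (a i - c i)|‖ := by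
  rw [norm_sum_of_nonneg hL u fun i _ => abs_nonneg _]
  refine (Finset.abs_sum_le_sum_abs _ _).trans (Finset.sum_le_sum fun i hi => ?_)
  rw [norm_abs_eq_norm, norm_smul, Real.norm_of_nonneg (hm i hi), abs_mul,
    abs_of_nonneg (hm i hi)]
  exact mul_le_mul_of_nonneg_left (abs_norm_sub_norm_le _ _) (hm i hi)

variable {T ι : Type*} [MeasurableSpace T] [PseudoMetricSpace T] {A : Set T} [Fintype ι]
  {C : ι → Set T}

theorem abs_sum_mul_norm_sub_le (hL : ∀ x y : X, 0 ≤ x → 0 ≤ y → ‖x + y‖ = ‖x‖ + ‖y‖)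
    (μ : Measure T) [IsFiniteMeasure μ] (f : T → X) {J b : X} {γ : T → ℝ}
    (hbd : ∀ Q : TaggedPart T A, Q.IsHenstock → Q.IsFine γ → |Q.sum f μ - J| ≤ b)
    (hC : IsMeasurablePartition C A) {g₁ g₂ : ι → T}
    (hg₁ : ∀ i, ∀ w ∈ C i, dist w (g₁ i) < γ (g₁ i))
    (hg₂ : ∀ i, ∀ w ∈ C i, dist w (g₂ i) < γ (g₂ i))
    (h₁₂ : TagsAnchored C g₁ g₂) (h₂₁ : TagsAnchored C g₂ g₁) :
    |∑ i, (μ (C i)).toReal * ‖f (g₁ i)‖ - ∑ i, (μ (C i)).toReal * ‖f (g₂ i)‖| ≤ 2 * ‖b‖ := by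
  have hsum := sum_abs_smul_sub_le μ f hbd hC hg₁ hg₂ h₁₂ h₂₁
  rw [← Finset.sum_sub_distrib]
  simp_rw [← mul_sub]
  calc _ ≤ ‖∑ i, |(μ (C i)).toReal • (f (g₁ i) - f (g₂ i))|‖ :=
        abs_sum_mul_norm_sub_norm_le hL _ (fun _ _ => ENNReal.toReal_nonneg) _ _
    _ ≤ ‖b + b‖ := norm_le_norm_of_abs_le_abs <| by
        rw [abs_of_nonneg (Finset.sum_nonneg fun _ _ => abs_nonneg _)]
        exact hsum.trans (le_abs_self _)
    _ ≤ 2 * ‖b‖ := by rw [two_mul]; exact norm_add_le b b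

end LSpaceEstimate

section CommonRefinement

variable {T κ : Type*} {Z : Finset T} {D : κ → Set T}

def pointTags (Z : Finset T) (u : κ → T) : Z ⊕ κ → T :=
  Sum.elim (↑) u

theorem tagsAnchored_pointTags {u v : κ → T} (hu : ∀ k, u k ∈ Z) :
    TagsAnchored (withPoints Z D) (pointTags Z u) (pointTags Z v) := by
  rintro (z | k)
  · exact .inl rfl
  · exact .inr ⟨.inl ⟨u k, hu k⟩, rfl, rfl, rfl⟩

variable [MeasurableSpace T] {A : Set T}

theorem TaggedPart.exists_withPoints_subset (Q : TaggedPart T A) (hZ : ↑Z ⊆ A)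
    (hD : ∀ k, ∃ a, D k ⊆ Q.E a) :
    ∃ σ : Z ⊕ κ → Fin Q.k, ∀ i, withPoints Z D i ⊆ Q.E (σ i) := by
  have : ∀ i, ∃ a, withPoints Z D i ⊆ Q.E a := by
    rintro (z | k)
    · obtain ⟨a, ha⟩ := mem_iUnion.1 (Q.cover.superset (hZ z.2))
      exact ⟨a, singleton_subset_iff.2 ha⟩
    · exact hD k
  choose σ hσ using this
  exact ⟨σ, hσ⟩

variable {Q : TaggedPart T A} {σ : Z ⊕ κ → Fin Q.k}

theorem index_singleton_tag (hQ : Q.IsHenstock) (hσ : ∀ i, withPoints Z D i ⊆ Q.E (σ i)) (a : Fin Q.k)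
    (ha : Q.tag a ∈ Z) : σ (.inl ⟨Q.tag a, ha⟩) = a :=
  Q.eq_of_mem_E (hσ _ rfl) (hQ a)

theorem tagsAnchored_tag_pointTags (hQ : Q.IsHenstock) (hZ : ∀ a, Q.tag a ∈ Z)
    (hσ : ∀ i, withPoints Z D i ⊆ Q.E (σ i)) :
    TagsAnchored (withPoints Z D) (fun i => Q.tag (σ i))
      (pointTags Z fun k => Q.tag (σ (.inr k))) := fun i =>
  .inr ⟨.inl ⟨_, hZ (σ i)⟩, congrArg Q.tag (index_singleton_tag hQ hσ _ _), rfl, rfl⟩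

theorem tagsAnchored_pointTags_tag (hQ : Q.IsHenstock) (hZ : ∀ a, Q.tag a ∈ Z)
    (hσ : ∀ i, withPoints Z D i ⊆ Q.E (σ i)) :
    TagsAnchored (withPoints Z D) (pointTags Z fun k => Q.tag (σ (.inr k)))
      (fun i => Q.tag (σ i)) := by
  rintro (z | k)
  · exact .inl rfl
  · exact .inr ⟨.inl ⟨_, hZ _⟩, rfl, congrArg Q.tag (index_singleton_tag hQ hσ _ _), rfl⟩

variable [PseudoMetricSpace T] {γ : T → ℝ}

theorem dist_lt_tag_of_subset_E (hQγ : Q.IsFine γ) (hσ : ∀ i, withPoints Z D i ⊆ Q.E (σ i)) (i : Z ⊕ κ) :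
    ∀ w ∈ withPoints Z D i, dist w (Q.tag (σ i)) < γ (Q.tag (σ i)) :=
  fun w hw => hQγ _ w (hσ i hw)

theorem dist_lt_pointTags (hγ : IsGage γ) (hQγ : Q.IsFine γ)
    (hσ : ∀ i, withPoints Z D i ⊆ Q.E (σ i)) :
    ∀ i, ∀ w ∈ withPoints Z D i, dist w (pointTags Z (fun k => Q.tag (σ (.inr k))) i) <
      γ (pointTags Z (fun k => Q.tag (σ (.inr k))) i)
  | .inl _, _, rfl => by simpa [pointTags] using hγ _
  | .inr k, w, hw => dist_lt_tag_of_subset_E hQγ hσ (.inr k) w hw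

end CommonRefinement

section KeyEstimate

variable {T : Type*} [MeasurableSpace T] [PseudoMetricSpace T] [MeasurableSingletonClass T]
  {A : Set T} {X : Type*} [NormedAddCommGroup X] [Lattice X] [HasSolidNorm X]
  [IsOrderedAddMonoid X] [NormedSpace ℝ X]

/-- Compare both Riemann sums on the common refinement in which the tags are split off as
singletons: retagging the singletons by themselves, then switching the remaining cells from the
tags of `P` to those of `P'`, then retagging the singletons as in `P'`, each step costs `2 ‖b‖`. -/
theorem abs_sum_norm_sub_sum_norm_le (hL : ∀ x y : X, 0 ≤ x → 0 ≤ y → ‖x + y‖ = ‖x‖ + ‖y‖)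
    (μ : Measure T) [IsFiniteMeasure μ] (f : T → X) {J b : X} {γ : T → ℝ} (hγ : IsGage γ)
    (hbd : ∀ Q : TaggedPart T A, Q.IsHenstock → Q.IsFine γ → |Q.sum f μ - J| ≤ b)
    {P P' : TaggedPart T A} (hP : P.IsHenstock) (hPγ : P.IsFine γ) (hP' : P'.IsHenstock)
    (hP'γ : P'.IsFine γ) :
    |P.sum (fun t => ‖f t‖) μ - P'.sum (fun t => ‖f t‖) μ| ≤ 6 * ‖b‖ := by
  classical
  set Z := Finset.univ.image P.tag ∪ Finset.univ.image P'.tag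
  have hPZ : ∀ a, P.tag a ∈ Z := fun a =>
    Finset.mem_union_left _ (Finset.mem_image_of_mem _ (Finset.mem_univ a))
  have hP'Z : ∀ a, P'.tag a ∈ Z := fun a =>
    Finset.mem_union_right _ (Finset.mem_image_of_mem _ (Finset.mem_univ a))
  have hZA : ↑Z ⊆ A := fun z hz => by
    rcases Finset.mem_union.1 hz with hz | hz <;> obtain ⟨a, -, rfl⟩ := Finset.mem_image.1 hz
    exacts [P.tag_mem hP a, P'.tag_mem hP' a]
  set C := withPoints Z fun p : Fin P.k × Fin P'.k => (P.E p.1 ∩ P'.E p.2) \ ↑Z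
  have hC : IsMeasurablePartition C A :=
    (P.isMeasurablePartition.inter P'.isMeasurablePartition).withPoints Z hZA
  obtain ⟨σ, hσ⟩ := P.exists_withPoints_subset hZA fun p : Fin P.k × Fin P'.k =>
    ⟨p.1, sdiff_subset.trans inter_subset_left⟩
  obtain ⟨σ', hσ'⟩ := P'.exists_withPoints_subset hZA fun p : Fin P.k × Fin P'.k =>
    ⟨p.2, sdiff_subset.trans inter_subset_right⟩
  have hsum : ∀ (Q : TaggedPart T A) (τ : _ → Fin Q.k), (∀ i, C i ⊆ Q.E (τ i)) →
      Q.sum (fun t => ‖f t‖) μ = ∑ i, (μ (C i)).toReal * ‖f (Q.tag (τ i))‖ :=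
    fun Q τ hτ => Q.sum_eq_sum_cells hC τ hτ μ _
  have e₁ := abs_sum_mul_norm_sub_le hL μ f hbd hC (dist_lt_tag_of_subset_E hPγ hσ)
    (dist_lt_pointTags hγ hPγ hσ) (tagsAnchored_tag_pointTags hP hPZ hσ)
    (tagsAnchored_pointTags_tag hP hPZ hσ)
  have e₂ := abs_sum_mul_norm_sub_le hL μ f hbd hC (dist_lt_pointTags hγ hPγ hσ)
    (dist_lt_pointTags hγ hP'γ hσ') (tagsAnchored_pointTags fun _ => hPZ _)
    (tagsAnchored_pointTags fun _ => hP'Z _)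
  have e₃ := abs_sum_mul_norm_sub_le hL μ f hbd hC (dist_lt_pointTags hγ hP'γ hσ')
    (dist_lt_tag_of_subset_E hP'γ hσ') (tagsAnchored_pointTags_tag hP' hP'Z hσ')
    (tagsAnchored_tag_pointTags hP' hP'Z hσ')
  rw [hsum P σ hσ, hsum P' σ' hσ']
  rw [abs_le] at e₁ e₂ e₃ ⊢
  constructor <;> linarith [e₁.1, e₁.2, e₂.1, e₂.2, e₃.1, e₃.2]

end KeyEstimate

section CauchyCriterion

theorem exists_antitone_gages {T : Type*} {γ : ℕ → T → ℝ} (hγ : ∀ n, IsGage (γ n)) :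
    ∃ δ : ℕ → T → ℝ, (∀ n, IsGage (δ n)) ∧ ∀ k n, k ≤ n → ∀ t, δ n t ≤ γ k t :=
  ⟨fun n t => (Finset.range (n + 1)).inf' Finset.nonempty_range_add_one fun k => γ k t,
    fun _ t => (Finset.lt_inf'_iff _).2 fun k _ => hγ k t,
    fun _ _ hkn _ => Finset.inf'_le _ (Finset.mem_range.2 (Nat.lt_succ_of_le hkn))⟩

variable {T : Type*} [MeasurableSpace T] [PseudoMetricSpace T] {A : Set T}

theorem exists_hasNormHIntegralOn_of_cauchy {X : Type*} [NormedAddCommGroup X] [Lattice X]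
    [HasSolidNorm X] [IsOrderedAddMonoid X] [NormedSpace ℝ X] [CompleteSpace X] {f : T → X}
    {μ : Measure T}
    (h : ∀ ε > 0, ∃ γ, IsGage γ ∧ ∀ P P' : TaggedPart T A, P.IsHenstock → P.IsFine γ →
      P'.IsHenstock → P'.IsFine γ → ‖P.sum f μ - P'.sum f μ‖ ≤ ε) :
    ∃ I, HasNormHIntegralOn f μ A I := by
  by_cases hex : ∀ δ, IsGage δ → ∃ P : TaggedPart T A, P.IsHenstock ∧ P.IsFine δ
  swap
  · -- some gage admits no fine Henstock partition, so every `I` is an integral vacuously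
    push Not at hex
    obtain ⟨δ, hδ, hno⟩ := hex
    exact ⟨0, fun ε _ => ⟨δ, hδ, fun P hP hPδ => absurd hPδ (hno P hP)⟩⟩
  choose γ hγ hγP using fun n : ℕ => h (1 / (n + 1)) Nat.one_div_pos_of_nat
  obtain ⟨δ, hδ, hδγ⟩ := exists_antitone_gages hγ
  choose P hP hPδ using fun n => hex (δ n) (hδ n)
  have hfine : ∀ k n, k ≤ n → (P n).IsFine (γ k) := fun k n hkn =>
    (hPδ n).mono_s11 (hδγ k n hkn)
  have hdist : ∀ m n k : ℕ, k ≤ m → k ≤ n →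
      dist ((P m).sum f μ) ((P n).sum f μ) ≤ 1 / (k + 1) := fun m n k hm hn =>
    (dist_eq_norm _ _).trans_le (hγP k _ _ (hP m) (hfine k m hm) (hP n) (hfine k n hn))
  obtain ⟨I, hI⟩ := cauchySeq_tendsto_of_complete
    (cauchySeq_of_le_tendsto_0 _ hdist tendsto_one_div_add_atTop_nhds_zero_nat)
  refine ⟨I, fun ε hε => ?_⟩
  obtain ⟨k, hk⟩ := exists_nat_one_div_lt (half_pos hε)
  obtain ⟨n, hnI, hn⟩ := ((hI.eventually (Metric.ball_mem_nhds I (half_pos hε))).and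
    (eventually_ge_atTop k)).exists
  refine ⟨γ k, hγ k, fun Q hQ hQγ => ?_⟩
  calc ‖Q.sum f μ - I‖ ≤ ‖Q.sum f μ - (P n).sum f μ‖ + ‖(P n).sum f μ - I‖ :=
        norm_sub_le_norm_sub_add_norm_sub _ _ _
    _ ≤ ε / 2 + ε / 2 := add_le_add ((hγP k _ _ hQ hQγ (hP n) (hfine k n hn)).trans hk.le)
        (mem_ball_iff_norm.1 hnI).le
    _ = ε := add_halves ε

end CauchyCriterion

theorem oH_norm_henstock_integrable_of_Lspace_general {T : Type*} [MetricSpace T] [MeasurableSpace T] [BorelSpace T]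
    (μ : Measure T) [IsFiniteMeasure μ]
    {X : Type*} [NormedAddCommGroup X] [Lattice X] [HasSolidNorm X] [IsOrderedAddMonoid X] [NormedSpace ℝ X] [CompleteSpace X]
    (hL : ∀ x y : X, 0 ≤ x → 0 ≤ y → ‖x + y‖ = ‖x‖ + ‖y‖) (f : T → X) (J : X)
    (hf : HasOHIntegralOn f μ Set.univ J) :
    ∃ I : ℝ, HasNormHIntegralOn (fun t => ‖f t‖) μ Set.univ I := by
  obtain ⟨b, hb, γ, hγ, hbd⟩ := hf
  refine exists_hasNormHIntegralOn_of_cauchy fun ε hε => ?_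
  obtain ⟨N, hN⟩ := ((tendsto_norm_of_isOSeq hL hb).eventually
    (gt_mem_nhds (show (0 : ℝ) < ε / 6 by positivity))).exists
  refine ⟨γ N, hγ N, fun P P' hP hPγ hP' hP'γ => ?_⟩
  rw [Real.norm_eq_abs]
  exact (abs_sum_norm_sub_sum_norm_le hL μ f (hγ N) (hbd N) hP hPγ hP' hP'γ).trans (by linarith)

theorem oH_norm_henstock_integrable_of_Lspace {T : Type*} [MetricSpace T] [CompactSpace T] [MeasurableSpace T] [BorelSpace T]
    (μ : Measure T) [IsFiniteMeasure μ] [μ.Regular]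
    {X : Type*} [NormedAddCommGroup X] [Lattice X] [HasSolidNorm X] [IsOrderedAddMonoid X] [NormedSpace ℝ X] [CompleteSpace X]
    (hL : ∀ x y : X, 0 ≤ x → 0 ≤ y → ‖x + y‖ = ‖x‖ + ‖y‖) (f : T → X) (J : X)
    (hf : HasOHIntegralOn f μ Set.univ J) :
    ∃ I : ℝ, HasNormHIntegralOn (fun t => ‖f t‖) μ Set.univ I :=
  oH_norm_henstock_integrable_of_Lspace_general μ hL f J hf
end
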